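/- Fix α ∈ ℝ. Then E₂(α; u₁, u₂) tends to (2/π)·arctan(α) as (u₁,u₂) → (0,0) within the set {(u₁,u₂) ∈ ℝ² : u₂ ≠ 0 and u₁ + α·u₂ ≠ 0}. (This is the continuity statement underlying the evaluation of the boosted generalized error function at x = 0 in Theorem A(b) and Corollary 4.7.) -/
import Mathlib


open Real Set Filter Topology

noncomputable section

/-- `ẽ₂(a,b) = (2/π)·b·e^{−πb²}·∫₀^a e^{−πv²}/(b²+v²) dv` (which is `0` for `b = 0`). -/
def etilde₂ (a b : ℝ) : ℝ :=
  (2 / Real.pi) * b * Real.exp (-Real.pi * b^2) *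
    ∫ v in (0:ℝ)..a, Real.exp (-Real.pi * v^2) / (b^2 + v^2)

/-- The generalized error function
`E₂(α;u₁,u₂) = −ẽ₂(u₁,u₂) − ẽ₂(u₁′,u₂′) + sgn(u₂)·sgn(u₂′)`, where
`u₁′ = (u₂ − αu₁)/√(1+α²)` and `u₂′ = (u₁ + αu₂)/√(1+α²)`. -/
def E₂ (α u₁ u₂ : ℝ) : ℝ :=
  - etilde₂ u₁ u₂
    - etilde₂ ((u₂ - α * u₁) / Real.sqrt (1 + α^2))
        ((u₁ + α * u₂) / Real.sqrt (1 + α^2))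
    + Real.sign u₂ * Real.sign ((u₁ + α * u₂) / Real.sqrt (1 + α^2))

lemma sign_div_pos {x s : ℝ} (hs : 0 < s) : Real.sign (x / s) = Real.sign x := by
  rcases lt_trichotomy x 0 with h | h | h
  · rw [Real.sign_of_neg h, Real.sign_of_neg (div_neg_of_neg_of_pos h hs)]
  · simp [h]
  · rw [Real.sign_of_pos h, Real.sign_of_pos (div_pos h hs)]

lemma key_arctan (α t : ℝ) (h : t + α ≠ 0) :
    arctan t + arctan ((1 - α * t) / (t + α))
      = π / 2 * Real.sign (t + α) - arctan α := by
  set θ := arctan t + arctan α with hθ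
  have hD : (0:ℝ) < Real.sqrt (1 + t ^ 2) * Real.sqrt (1 + α ^ 2) := by
    apply mul_pos <;> exact Real.sqrt_pos.2 (by positivity)
  have hsin : Real.sin θ = (t + α) / (Real.sqrt (1 + t ^ 2) * Real.sqrt (1 + α ^ 2)) := by
    rw [hθ, Real.sin_add, Real.sin_arctan, Real.cos_arctan, Real.sin_arctan, Real.cos_arctan]
    field_simp
  have hcos : Real.cos θ = (1 - t * α) / (Real.sqrt (1 + t ^ 2) * Real.sqrt (1 + α ^ 2)) := by
    rw [hθ, Real.cos_add, Real.sin_arctan, Real.cos_arctan, Real.sin_arctan, Real.cos_arctan]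
    field_simp
  have hratio : (1 - α * t) / (t + α) = Real.cos θ / Real.sin θ := by
    rw [hsin, hcos, div_div_div_eq]
    rw [mul_comm (1 - t * α) _, mul_div_mul_left _ _ hD.ne']
    ring_nf
  have hθlt : θ < π := by
    have := arctan_lt_pi_div_two t
    have := arctan_lt_pi_div_two α
    rw [hθ]; linarith
  have hθgt : -π < θ := by
    have := neg_pi_div_two_lt_arctan t
    have := neg_pi_div_two_lt_arctan α
    rw [hθ]; linarith
  have htan : Real.tan (π / 2 - θ) = Real.cos θ / Real.sin θ := by
    rw [Real.tan_pi_div_two_sub, Real.tan_eq_sin_div_cos, inv_div]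
  rcases h.lt_or_gt with hlt | hlt
  · -- t + α < 0
    have hsneg : Real.sin θ < 0 := by
      rw [hsin]; exact div_neg_of_neg_of_pos hlt hD
    have hθ0 : θ < 0 := by
      by_contra hc
      push_neg at hc
      exact absurd (Real.sin_nonneg_of_nonneg_of_le_pi hc hθlt.le) (not_le.2 hsneg)
    have : arctan ((1 - α * t) / (t + α)) = -(π / 2) - θ := by
      rw [hratio, ← htan, ← Real.tan_periodic.sub_eq (π / 2 - θ)]
      have : π / 2 - θ - π = -(π / 2) - θ := by ring
      rw [this]
      exact arctan_tan (by linarith) (by linarith)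
    rw [this, Real.sign_of_neg hlt, hθ]
    ring
  · -- 0 < t + α
    have hspos : 0 < Real.sin θ := by
      rw [hsin]; exact div_pos hlt hD
    have hθ0 : 0 < θ := by
      by_contra hc
      push_neg at hc
      exact absurd (Real.sin_nonpos_of_nonpos_of_neg_pi_le hc hθgt.le) (not_le.2 hspos)
    have : arctan ((1 - α * t) / (t + α)) = π / 2 - θ := by
      rw [hratio, ← htan]
      exact arctan_tan (by linarith) (by linarith)
    rw [this, Real.sign_of_pos hlt, hθ]
    ring

lemma key_arctan' (α u₁ u₂ : ℝ) (h2 : u₂ ≠ 0) (hw : u₁ + α * u₂ ≠ 0) :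
    arctan (u₁ / u₂) + arctan ((u₂ - α * u₁) / (u₁ + α * u₂))
      = π / 2 * (Real.sign u₂ * Real.sign (u₁ + α * u₂)) - arctan α := by
  have ht : u₁ / u₂ + α ≠ 0 := by
    rw [div_add' _ _ _ h2]
    exact div_ne_zero hw h2
  have h1 : (u₂ - α * u₁) / (u₁ + α * u₂) = (1 - α * (u₁ / u₂)) / (u₁ / u₂ + α) := by
    have e1 : 1 - α * (u₁ / u₂) = (u₂ - α * u₁) / u₂ := by field_simp
    have e2 : u₁ / u₂ + α = (u₁ + α * u₂) / u₂ := by field_simp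
    rw [e1, e2, div_div_div_cancel_right₀ h2]
  have h2' : Real.sign (u₁ / u₂ + α) = Real.sign u₂ * Real.sign (u₁ + α * u₂) := by
    rw [div_add' _ _ _ h2]
    rcases h2.lt_or_gt with hneg | hpos
    · have : (u₁ + α * u₂) / u₂ = (-(u₁ + α * u₂)) / (-u₂) := by
        rw [neg_div_neg_eq]
      rw [this, sign_div_pos (by linarith), Real.sign_of_neg hneg, Real.sign_neg]
      ring
    · rw [sign_div_pos hpos, Real.sign_of_pos hpos, one_mul]
  rw [h1, ← h2']
  exact key_arctan α (u₁ / u₂) ht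

lemma etilde_bound (a b : ℝ) (hb : b ≠ 0) :
    |etilde₂ a b - 2 / π * arctan (a / b)|
      ≤ |Real.exp (-π * b ^ 2) - 1| + 2 * (|a| * |b|) := by
  have hbsq : ∀ v : ℝ, (0:ℝ) < b ^ 2 + v ^ 2 := fun v => by positivity
  have hc1 : Continuous fun v : ℝ => Real.exp (-π * v ^ 2) / (b ^ 2 + v ^ 2) := by
    apply Continuous.div (by fun_prop) (by fun_prop) fun v => (hbsq v).ne'
  have hc2 : Continuous fun v : ℝ => 1 / (b ^ 2 + v ^ 2) := by
    apply Continuous.div continuous_const (by fun_prop) fun v => (hbsq v).ne'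
  have I1 : IntervalIntegrable (fun v : ℝ => Real.exp (-π * v ^ 2) / (b ^ 2 + v ^ 2))
      MeasureTheory.volume 0 a := hc1.intervalIntegrable 0 a
  have I2 : IntervalIntegrable (fun v : ℝ => 1 / (b ^ 2 + v ^ 2))
      MeasureTheory.volume 0 a := hc2.intervalIntegrable 0 a
  -- the arctan integral
  have harc : b * ∫ v in (0:ℝ)..a, 1 / (b ^ 2 + v ^ 2) = arctan (a / b) := by
    have : ∀ v : ℝ, 1 / (b ^ 2 + v ^ 2) = b⁻¹ * (b⁻¹ * (1 / (1 + (v / b) ^ 2))) := by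
      intro v
      field_simp
    rw [intervalIntegral.integral_congr (g := fun v : ℝ =>
        b⁻¹ * (b⁻¹ * (1 / (1 + (v / b) ^ 2)))) (fun v _ => this v)]
    rw [intervalIntegral.integral_const_mul, intervalIntegral.integral_const_mul,
      intervalIntegral.integral_comp_div (fun x : ℝ => 1 / (1 + x ^ 2)) hb]
    simp only [zero_div, smul_eq_mul, integral_one_div_one_add_sq, arctan_zero, sub_zero]
    field_simp
  -- the remainder
  have hsplit : (∫ v in (0:ℝ)..a, Real.exp (-π * v ^ 2) / (b ^ 2 + v ^ 2))
      = (∫ v in (0:ℝ)..a, 1 / (b ^ 2 + v ^ 2))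
        + ∫ v in (0:ℝ)..a, (Real.exp (-π * v ^ 2) - 1) / (b ^ 2 + v ^ 2) := by
    have hsub : ∀ v : ℝ, (Real.exp (-π * v ^ 2) - 1) / (b ^ 2 + v ^ 2)
        = Real.exp (-π * v ^ 2) / (b ^ 2 + v ^ 2) - 1 / (b ^ 2 + v ^ 2) := fun v => by ring
    rw [intervalIntegral.integral_congr (g := fun v : ℝ =>
        Real.exp (-π * v ^ 2) / (b ^ 2 + v ^ 2) - 1 / (b ^ 2 + v ^ 2)) (fun v _ => hsub v),
      intervalIntegral.integral_sub I1 I2]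
    ring
  have hR : |∫ v in (0:ℝ)..a, (Real.exp (-π * v ^ 2) - 1) / (b ^ 2 + v ^ 2)| ≤ π * |a| := by
    have := intervalIntegral.norm_integral_le_of_norm_le_const
      (C := π) (f := fun v : ℝ => (Real.exp (-π * v ^ 2) - 1) / (b ^ 2 + v ^ 2))
      (a := (0:ℝ)) (b := a) ?_
    · simpa using this
    · intro v _
      rw [Real.norm_eq_abs, abs_div, abs_of_pos (hbsq v)]
      have he1 : Real.exp (-π * v ^ 2) ≤ 1 := by
        rw [Real.exp_le_one_iff]
        nlinarith [sq_nonneg v, pi_pos]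
      have he2 : 1 - π * v ^ 2 ≤ Real.exp (-π * v ^ 2) := by
        have := Real.add_one_le_exp (-π * v ^ 2)
        linarith
      have habs : |Real.exp (-π * v ^ 2) - 1| ≤ π * v ^ 2 := by
        rw [abs_sub_comm, abs_of_nonneg (by linarith)]
        linarith
      calc |Real.exp (-π * v ^ 2) - 1| / (b ^ 2 + v ^ 2)
          ≤ π * v ^ 2 / (b ^ 2 + v ^ 2) := by
            exact div_le_div_of_nonneg_right habs (hbsq v).le
        _ ≤ π := by
            rw [div_le_iff₀ (hbsq v)]
            nlinarith [sq_nonneg b, pi_pos, sq_nonneg v]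
  -- now combine
  have hexp_pos : (0:ℝ) < Real.exp (-π * b ^ 2) := Real.exp_pos _
  have hexp_le : Real.exp (-π * b ^ 2) ≤ 1 := by
    rw [Real.exp_le_one_iff]
    nlinarith [sq_nonneg b, pi_pos]
  have hπ : (0:ℝ) < π := pi_pos
  set R := ∫ v in (0:ℝ)..a, (Real.exp (-π * v ^ 2) - 1) / (b ^ 2 + v ^ 2) with hRdef
  have hE : etilde₂ a b = 2 / π * Real.exp (-π * b ^ 2) * arctan (a / b)
      + 2 / π * Real.exp (-π * b ^ 2) * (b * R) := by
    simp only [etilde₂]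
    rw [hsplit, ← harc]
    ring
  have hsplit2 : etilde₂ a b - 2 / π * arctan (a / b)
      = 2 / π * (Real.exp (-π * b ^ 2) - 1) * arctan (a / b)
        + 2 / π * Real.exp (-π * b ^ 2) * (b * R) := by
    rw [hE]; ring
  rw [hsplit2]
  have h2π : (0:ℝ) < 2 / π := by positivity
  have hA : |arctan (a / b)| ≤ π / 2 :=
    (abs_lt.2 ⟨neg_pi_div_two_lt_arctan _, arctan_lt_pi_div_two _⟩).le
  have hb1 : |2 / π * (Real.exp (-π * b ^ 2) - 1) * arctan (a / b)|
      ≤ |Real.exp (-π * b ^ 2) - 1| := by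
    rw [abs_mul, abs_mul, abs_of_pos h2π]
    calc 2 / π * |Real.exp (-π * b ^ 2) - 1| * |arctan (a / b)|
        ≤ 2 / π * |Real.exp (-π * b ^ 2) - 1| * (π / 2) :=
          mul_le_mul_of_nonneg_left hA (by positivity)
      _ = |Real.exp (-π * b ^ 2) - 1| := by
          field_simp
  have hb2 : |2 / π * Real.exp (-π * b ^ 2) * (b * R)| ≤ 2 * (|a| * |b|) := by
    rw [abs_mul, abs_mul, abs_mul, abs_of_pos h2π, abs_of_pos hexp_pos]
    have e1 : 2 / π * Real.exp (-π * b ^ 2) ≤ 2 / π := by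
      nlinarith
    have e2 : |b| * |R| ≤ |b| * (π * |a|) :=
      mul_le_mul_of_nonneg_left hR (abs_nonneg b)
    calc 2 / π * Real.exp (-π * b ^ 2) * (|b| * |R|)
        ≤ 2 / π * (|b| * (π * |a|)) := by
          apply mul_le_mul e1 e2 (by positivity) (by positivity)
      _ = 2 * (|a| * |b|) := by field_simp
  calc |2 / π * (Real.exp (-π * b ^ 2) - 1) * arctan (a / b)
        + 2 / π * Real.exp (-π * b ^ 2) * (b * R)|
      ≤ |2 / π * (Real.exp (-π * b ^ 2) - 1) * arctan (a / b)|
        + |2 / π * Real.exp (-π * b ^ 2) * (b * R)| := abs_add_le _ _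
    _ ≤ |Real.exp (-π * b ^ 2) - 1| + 2 * (|a| * |b|) := add_le_add hb1 hb2
/-- The continuity statement underlying `E₂(α;0,0) = (2/π)arctan(α)` in
Theorem A(b) / Corollary 4.7 of the paper: `E₂(α;u₁,u₂) → (2/π)·arctan α` as
`(u₁,u₂) → (0,0)` within `{(u₁,u₂) : u₂ ≠ 0, u₁ + αu₂ ≠ 0}`. -/
theorem E₂_tendsto_arctan (α : ℝ) :
    Tendsto (fun p : ℝ × ℝ => E₂ α p.1 p.2)
      (nhdsWithin ((0:ℝ), (0:ℝ)) {p : ℝ × ℝ | p.2 ≠ 0 ∧ p.1 + α * p.2 ≠ 0})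
      (nhds (2 / Real.pi * Real.arctan α)) := by
  set l := nhdsWithin ((0:ℝ), (0:ℝ)) {p : ℝ × ℝ | p.2 ≠ 0 ∧ p.1 + α * p.2 ≠ 0} with hl
  have hs : 0 < Real.sqrt (1 + α ^ 2) := Real.sqrt_pos.2 (by positivity)
  have hπ : (0:ℝ) < π := pi_pos
  have hmem : ∀ᶠ p in l, p ∈ {p : ℝ × ℝ | p.2 ≠ 0 ∧ p.1 + α * p.2 ≠ 0} :=
    eventually_mem_nhdsWithin
  -- the exact algebraic identity on the set
  have heq : ∀ p : ℝ × ℝ, p ∈ {p : ℝ × ℝ | p.2 ≠ 0 ∧ p.1 + α * p.2 ≠ 0} →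
      E₂ α p.1 p.2 = 2 / π * arctan α
        - (etilde₂ p.1 p.2 - 2 / π * arctan (p.1 / p.2))
        - (etilde₂ ((p.2 - α * p.1) / Real.sqrt (1 + α ^ 2))
              ((p.1 + α * p.2) / Real.sqrt (1 + α ^ 2))
            - 2 / π * arctan ((p.2 - α * p.1) / (p.1 + α * p.2))) := by
    rintro ⟨u₁, u₂⟩ ⟨h2, hw⟩
    simp only [E₂]
    rw [sign_div_pos hs]
    have hk := key_arctan' α u₁ u₂ h2 hw
    have hsgn : Real.sign u₂ * Real.sign (u₁ + α * u₂)
        = 2 / π * (arctan (u₁ / u₂) + arctan ((u₂ - α * u₁) / (u₁ + α * u₂)) + arctan α) := by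
      rw [hk]
      field_simp
      ring
    rw [hsgn]
    ring_nf
  -- the two error terms tend to zero
  have hb1 : Tendsto (fun p : ℝ × ℝ => |Real.exp (-π * p.2 ^ 2) - 1| + 2 * (|p.1| * |p.2|))
      l (𝓝 0) := by
    have hc : Continuous fun p : ℝ × ℝ => |Real.exp (-π * p.2 ^ 2) - 1| + 2 * (|p.1| * |p.2|) := by
      fun_prop
    have := hc.tendsto' ((0:ℝ), (0:ℝ)) 0 (by norm_num)
    exact this.mono_left nhdsWithin_le_nhds
  have hg1 : Tendsto (fun p : ℝ × ℝ => etilde₂ p.1 p.2 - 2 / π * arctan (p.1 / p.2)) l (𝓝 0) := by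
    apply squeeze_zero_norm' _ hb1
    filter_upwards [hmem] with p hp
    exact etilde_bound p.1 p.2 hp.1
  have hb2 : Tendsto (fun p : ℝ × ℝ =>
      |Real.exp (-π * ((p.1 + α * p.2) / Real.sqrt (1 + α ^ 2)) ^ 2) - 1|
        + 2 * (|(p.2 - α * p.1) / Real.sqrt (1 + α ^ 2)|
            * |(p.1 + α * p.2) / Real.sqrt (1 + α ^ 2)|)) l (𝓝 0) := by
    have hc : Continuous fun p : ℝ × ℝ =>
        |Real.exp (-π * ((p.1 + α * p.2) / Real.sqrt (1 + α ^ 2)) ^ 2) - 1|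
          + 2 * (|(p.2 - α * p.1) / Real.sqrt (1 + α ^ 2)|
              * |(p.1 + α * p.2) / Real.sqrt (1 + α ^ 2)|) := by
      fun_prop
    have := hc.tendsto' ((0:ℝ), (0:ℝ)) 0 (by norm_num)
    exact this.mono_left nhdsWithin_le_nhds
  have hg2 : Tendsto (fun p : ℝ × ℝ =>
      etilde₂ ((p.2 - α * p.1) / Real.sqrt (1 + α ^ 2))
          ((p.1 + α * p.2) / Real.sqrt (1 + α ^ 2))
        - 2 / π * arctan ((p.2 - α * p.1) / (p.1 + α * p.2))) l (𝓝 0) := by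
    apply squeeze_zero_norm' _ hb2
    filter_upwards [hmem] with p hp
    have hb : (p.1 + α * p.2) / Real.sqrt (1 + α ^ 2) ≠ 0 := div_ne_zero hp.2 hs.ne'
    have hratio : ((p.2 - α * p.1) / Real.sqrt (1 + α ^ 2))
        / ((p.1 + α * p.2) / Real.sqrt (1 + α ^ 2)) = (p.2 - α * p.1) / (p.1 + α * p.2) :=
      div_div_div_cancel_right₀ hs.ne' _ _
    have := etilde_bound ((p.2 - α * p.1) / Real.sqrt (1 + α ^ 2))
      ((p.1 + α * p.2) / Real.sqrt (1 + α ^ 2)) hb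
    rwa [hratio] at this
  have hfinal : Tendsto (fun p : ℝ × ℝ => 2 / π * arctan α
      - (etilde₂ p.1 p.2 - 2 / π * arctan (p.1 / p.2))
      - (etilde₂ ((p.2 - α * p.1) / Real.sqrt (1 + α ^ 2))
            ((p.1 + α * p.2) / Real.sqrt (1 + α ^ 2))
          - 2 / π * arctan ((p.2 - α * p.1) / (p.1 + α * p.2))))
      l (𝓝 (2 / π * arctan α)) := by
    have := (tendsto_const_nhds (x := 2 / π * arctan α) (f := l)).sub hg1 |>.sub hg2
    simpa using this
  apply hfinal.congr'
  filter_upwards [hmem] with p hp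
  exact (heq p hp).symm
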